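/- Suppose that for each feasible solution x̄ of BP there exists a feasible ȳ of BP with x̄ + ȳ ≤ e. If a^T x ≤ a₀ defines a facet of P_BP, then (a ⊕ 0 ⊕ 0)^T(x ⊕ y ⊕ z) ≤ a₀ and (0 ⊕ a ⊕ 0)^T(x ⊕ y ⊕ z) ≤ a₀ each define a facet of the diameter polytope P_BPD'. -/

import Mathlib

open Matrix Finset

def BinaryVec {n : ℕ} (x : Fin n → ℝ) : Prop := ∀ i, x i = 0 ∨ x i = 1

/-- Feasibility for BP: `Ax ≤ b`, `x ∈ {0,1}ⁿ`. -/
def FeasBP {n m : ℕ} (A : Matrix (Fin m) (Fin n) ℝ) (b : Fin m → ℝ)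
    (x : Fin n → ℝ) : Prop :=
  BinaryVec x ∧ A.mulVec x ≤ b

/-- Feasibility for BPD' : `Ax ≤ b`, `Ay ≤ b`, `x + y - z ≤ e`, `x, y, z ∈ {0,1}ⁿ`. -/
def FeasBPD' {n m : ℕ} (A : Matrix (Fin m) (Fin n) ℝ) (b : Fin m → ℝ)
    (x y z : Fin n → ℝ) : Prop :=
  FeasBP A b x ∧ FeasBP A b y ∧ BinaryVec z ∧ (∀ i, x i + y i - z i ≤ 1)

/-- The polytope underlying BP: the convex hull of its feasible set. -/
def polyBP {n m : ℕ} (A : Matrix (Fin m) (Fin n) ℝ) (b : Fin m → ℝ) :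
    Set (Fin n → ℝ) :=
  convexHull ℝ {x | FeasBP A b x}

/-- The diameter polytope `P_BPD'` in `ℝⁿ × ℝⁿ × ℝⁿ ≅ ℝ^{3n}`. -/
def polyBPD' {n m : ℕ} (A : Matrix (Fin m) (Fin n) ℝ) (b : Fin m → ℝ) :
    Set ((Fin n → ℝ) × (Fin n → ℝ) × (Fin n → ℝ)) :=
  convexHull ℝ {p | FeasBPD' A b p.1 p.2.1 p.2.2}

/-- The dimension of a polytope: the dimension of its affine hull. -/
noncomputable def polyDim {V : Type*} [AddCommGroup V] [Module ℝ V]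
    (P : Set V) : ℕ :=
  Module.finrank ℝ (affineSpan ℝ P).direction

/-- `f p ≤ a₀` is a facet-defining inequality of `P`: it is valid on `P` and the
face it defines is nonempty of dimension `dim P - 1`. -/
noncomputable def IsFacet {V : Type*} [AddCommGroup V] [Module ℝ V]
    (P : Set V) (f : V → ℝ) (a₀ : ℝ) : Prop :=
  (∀ p ∈ P, f p ≤ a₀) ∧ ({p ∈ P | f p = a₀}).Nonempty ∧
    polyDim {p ∈ P | f p = a₀} + 1 = polyDim P

/-!
A facet `aᵀx ≤ a₀` of `P_BP` is cut out of its feasible set `S` by the tight points `T`, with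
`dim T + 1 = dim S`. The feasible set of the diameter problem is `{(x, y, z) : x, y ∈ S, z binary,
x + y - z ≤ e}`, and its tight points for `aᵀx ≤ a₀` are the same set with `x ∈ T`. The affine hull
of such a set `{x ∈ C₁, y ∈ C₂, …}` is the full product `aff C₁ × aff C₂ × ℝⁿ` as soon as some
`x₀ ∈ C₁`, `y₀ ∈ C₂` have disjoint supports: `(x, y₀, e)` and `(x₀, y, e)` are always feasible,
and so is `(x₀, y₀, z)` for every binary `z`. Hence both dimensions grow by `dim S + n`, and the
complement hypothesis supplies the pairs with disjoint supports.
-/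

open Module

section ConvexHull

variable {V : Type*} [AddCommGroup V] [Module ℝ V]

theorem sep_convexHull_eq_convexHull_sep {S : Set V} {f : V →ₗ[ℝ] ℝ} {a₀ : ℝ}
    (hf : ∀ s ∈ S, f s ≤ a₀) :
    {p ∈ convexHull ℝ S | f p = a₀} = convexHull ℝ {s ∈ S | f s = a₀} := by
  refine subset_antisymm ?_ fun p hp => ⟨convexHull_mono (Set.sep_subset _ _) hp,
    convexHull_min (fun s hs => hs.2) (convex_hyperplane f.isLinear a₀) hp⟩
  rintro p ⟨hp, hfp⟩
  classical
  rw [_root_.convexHull_eq] at hp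
  obtain ⟨ι, t, w, z, hw0, hw1, hzS, rfl⟩ := hp
  -- The slacks `a₀ - f (z i)` are nonnegative and average to zero, so they vanish where `w i ≠ 0`.
  have hslack : ∑ i ∈ t, w i * (a₀ - f (z i)) = 0 := by
    have hf_cm : f (t.centerMass w z) = ∑ i ∈ t, w i * f (z i) := by
      simp [Finset.centerMass_eq_of_sum_1 t z hw1, map_sum]
    simp only [mul_sub, Finset.sum_sub_distrib, ← Finset.sum_mul, hw1, ← hf_cm, hfp, sub_self,
      one_mul]
  have htight := (Finset.sum_eq_zero_iff_of_nonneg fun i hi =>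
    mul_nonneg (hw0 i hi) (sub_nonneg.2 (hf _ (hzS i hi)))).1 hslack
  rw [← Finset.centerMass_filter_ne_zero]
  refine Finset.centerMass_mem_convexHull _ (fun i hi => hw0 i (Finset.mem_filter.1 hi).1)
    (by rw [Finset.sum_filter_ne_zero, hw1]; exact one_pos) fun i hi => ?_
  obtain ⟨hit, hwi⟩ := Finset.mem_filter.1 hi
  exact ⟨hzS i hit, (sub_eq_zero.1 ((mul_eq_zero.1 (htight i hit)).resolve_left hwi)).symm⟩

theorem polyDim_convexHull (S : Set V) :
    polyDim (convexHull ℝ S) = finrank ℝ (vectorSpan ℝ S) := by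
  rw [polyDim, affineSpan_convexHull, direction_affineSpan]

theorem isFacet_convexHull_iff {S : Set V} {f : V →ₗ[ℝ] ℝ} {a₀ : ℝ} :
    IsFacet (convexHull ℝ S) f a₀ ↔ (∀ s ∈ S, f s ≤ a₀) ∧ {s ∈ S | f s = a₀}.Nonempty ∧
      finrank ℝ (vectorSpan ℝ {s ∈ S | f s = a₀}) + 1 = finrank ℝ (vectorSpan ℝ S) := by
  have hvalid : (∀ p ∈ convexHull ℝ S, f p ≤ a₀) ↔ ∀ s ∈ S, f s ≤ a₀ :=
    ⟨fun h s hs => h s (subset_convexHull ℝ S hs),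
      fun h => convexHull_min h (convex_halfSpace_le f.isLinear a₀)⟩
  rw [IsFacet, hvalid]
  refine and_congr_right fun hf => ?_
  rw [sep_convexHull_eq_convexHull_sep hf, convexHull_nonempty_iff,
    polyDim_convexHull, polyDim_convexHull]

end ConvexHull

theorem Submodule.finrank_prod {K M N : Type*} [Field K] [AddCommGroup M] [AddCommGroup N]
    [Module K M] [Module K N] (p : Submodule K M) (q : Submodule K N) [FiniteDimensional K p]
    [FiniteDimensional K q] :
    finrank K (p.prod q) = finrank K p + finrank K q := by
  have h := LinearMap.finrank_range_of_inj (f := p.subtype.prodMap q.subtype)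
    (Prod.map_injective.2 ⟨p.injective_subtype, q.injective_subtype⟩)
  rw [LinearMap.range_prodMap, p.range_subtype, q.range_subtype] at h
  rw [h, Module.finrank_prod]

theorem vectorSpan_le_comap {V W : Type*} [AddCommGroup V] [Module ℝ V] [AddCommGroup W]
    [Module ℝ W] (L : V →ₗ[ℝ] W) (c : W) {s : Set V} {t : Set W} (h : ∀ x ∈ s, L x + c ∈ t) :
    vectorSpan ℝ s ≤ (vectorSpan ℝ t).comap L := by
  rw [vectorSpan_def, Submodule.span_le]
  rintro _ ⟨x, hx, x', hx', rfl⟩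
  simpa using vsub_mem_vectorSpan ℝ (h x hx) (h x' hx')

section Diameter

variable {n : ℕ}

theorem BinaryVec.nonneg {x : Fin n → ℝ} (hx : BinaryVec x) : 0 ≤ x := fun i => by
  rcases hx i with h | h <;> simp [h]

theorem BinaryVec.le_one {x : Fin n → ℝ} (hx : BinaryVec x) : x ≤ 1 := fun i => by
  rcases hx i with h | h <;> simp [h]

theorem vectorSpan_binaryVec : vectorSpan ℝ {z : Fin n → ℝ | BinaryVec z} = ⊤ := by
  have hzero : (0 : Fin n → ℝ) ∈ {z | BinaryVec z} := fun _ => Or.inl rfl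
  rw [eq_top_iff, ← (Pi.basisFun ℝ (Fin n)).span_eq, Submodule.span_le]
  rintro _ ⟨i, rfl⟩
  have hbasis : Pi.basisFun ℝ (Fin n) i ∈ {z | BinaryVec z} := fun j => by
    by_cases h : j = i <;> simp [h]
  simpa using vsub_mem_vectorSpan ℝ hbasis hzero

/-- For `C₁ = C₂` the feasible set of BP, this is the feasible set of BPD'. -/
def diamSet (C₁ C₂ : Set (Fin n → ℝ)) : Set ((Fin n → ℝ) × (Fin n → ℝ) × (Fin n → ℝ)) :=
  {p | p.1 ∈ C₁ ∧ p.2.1 ∈ C₂ ∧ BinaryVec p.2.2 ∧ ∀ i, p.1 i + p.2.1 i - p.2.2 i ≤ 1}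

variable {C₁ C₂ : Set (Fin n → ℝ)}

theorem sep_diamSet_fst (P : (Fin n → ℝ) → Prop) :
    {p ∈ diamSet C₁ C₂ | P p.1} = diamSet {x ∈ C₁ | P x} C₂ := by
  ext p
  simp only [diamSet, Set.mem_ofPred_eq]
  tauto

theorem sep_diamSet_snd (P : (Fin n → ℝ) → Prop) :
    {p ∈ diamSet C₁ C₂ | P p.2.1} = diamSet C₁ {y ∈ C₂ | P y} := by
  ext p
  simp only [diamSet, Set.mem_ofPred_eq]
  tauto

theorem mk_mem_diamSet_of_add_le_one {x y z : Fin n → ℝ} (hx : x ∈ C₁) (hy : y ∈ C₂)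
    (hxy : ∀ i, x i + y i ≤ 1) (hz : BinaryVec z) : (x, y, z) ∈ diamSet C₁ C₂ :=
  ⟨hx, hy, hz, fun i =>
    show x i + y i - z i ≤ 1 by linarith [hxy i, show 0 ≤ z i from hz.nonneg i]⟩

theorem mk_one_mem_diamSet {x y : Fin n → ℝ} (hx : x ∈ C₁) (hy : y ∈ C₂) (hx₁ : x ≤ 1)
    (hy₁ : y ≤ 1) : (x, y, 1) ∈ diamSet C₁ C₂ :=
  ⟨hx, hy, fun _ => Or.inr rfl, fun i =>
    show x i + y i - 1 ≤ 1 by linarith [show x i ≤ 1 from hx₁ i, show y i ≤ 1 from hy₁ i]⟩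

theorem vectorSpan_diamSet (h₁ : ∀ x ∈ C₁, x ≤ 1) (h₂ : ∀ y ∈ C₂, y ≤ 1) {x₀ y₀ : Fin n → ℝ}
    (hx₀ : x₀ ∈ C₁) (hy₀ : y₀ ∈ C₂) (hx₀y₀ : ∀ i, x₀ i + y₀ i ≤ 1) :
    vectorSpan ℝ (diamSet C₁ C₂) = (vectorSpan ℝ C₁).prod ((vectorSpan ℝ C₂).prod ⊤) := by
  let B : Set (Fin n → ℝ) := {z | BinaryVec z}
  have hzero : (0 : Fin n → ℝ) ∈ B := fun _ => Or.inl rfl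
  refine le_antisymm ?_ ?_
  · rw [← vectorSpan_binaryVec, ← vectorSpan_prod_eq (s := C₂) (t := B) ⟨y₀, hy₀⟩ ⟨0, hzero⟩,
      ← vectorSpan_prod_eq (s := C₁) (t := C₂ ×ˢ B) ⟨x₀, hx₀⟩ ⟨(y₀, 0), hy₀, hzero⟩]
    exact vectorSpan_mono ℝ fun p hp => ⟨hp.1, hp.2.1, hp.2.2.1⟩
  rintro ⟨u, v, w⟩ ⟨hu, hv, -⟩
  let ι₁ := LinearMap.inl ℝ (Fin n → ℝ) ((Fin n → ℝ) × (Fin n → ℝ))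
  let ι₂ := LinearMap.inr ℝ (Fin n → ℝ) _ ∘ₗ LinearMap.inl ℝ (Fin n → ℝ) (Fin n → ℝ)
  let ι₃ := LinearMap.inr ℝ (Fin n → ℝ) _ ∘ₗ LinearMap.inr ℝ (Fin n → ℝ) (Fin n → ℝ)
  have hu' := vectorSpan_le_comap ι₁ (0, y₀, 1)
    (fun x hx => by simpa [ι₁] using mk_one_mem_diamSet hx hy₀ (h₁ x hx) (h₂ y₀ hy₀)) hu
  have hv' := vectorSpan_le_comap ι₂ (x₀, 0, 1)
    (fun y hy => by simpa [ι₂] using mk_one_mem_diamSet hx₀ hy (h₁ x₀ hx₀) (h₂ y hy)) hv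
  have hw' := vectorSpan_le_comap ι₃ (x₀, y₀, 0)
    (fun z hz => by simpa [ι₃] using mk_mem_diamSet_of_add_le_one hx₀ hy₀ hx₀y₀ hz)
    (vectorSpan_binaryVec (n := n) ▸ Submodule.mem_top (x := w))
  have hsplit : (u, v, w) = ι₁ u + ι₂ v + ι₃ w := by simp [ι₁, ι₂, ι₃]
  rw [hsplit]
  exact add_mem (add_mem hu' hv') hw'

theorem finrank_vectorSpan_diamSet (h₁ : ∀ x ∈ C₁, x ≤ 1) (h₂ : ∀ y ∈ C₂, y ≤ 1)
    {x₀ y₀ : Fin n → ℝ} (hx₀ : x₀ ∈ C₁) (hy₀ : y₀ ∈ C₂) (hx₀y₀ : ∀ i, x₀ i + y₀ i ≤ 1) :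
    finrank ℝ (vectorSpan ℝ (diamSet C₁ C₂)) =
      finrank ℝ (vectorSpan ℝ C₁) + finrank ℝ (vectorSpan ℝ C₂) + n := by
  rw [vectorSpan_diamSet h₁ h₂ hx₀ hy₀ hx₀y₀, Submodule.finrank_prod, Submodule.finrank_prod,
    finrank_top, finrank_fin_fun, add_assoc]

variable {C : Set (Fin n → ℝ)} (hC : ∀ x ∈ C, x ≤ 1)
  (hcomp : ∀ x ∈ C, ∃ y ∈ C, ∀ i, x i + y i ≤ 1) {g : (Fin n → ℝ) →ₗ[ℝ] ℝ} {a₀ : ℝ}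
include hC hcomp

theorem isFacet_diamSet_fst (h : IsFacet (convexHull ℝ C) g a₀) :
    IsFacet (convexHull ℝ (diamSet C C)) (fun p => g p.1) a₀ := by
  obtain ⟨hvalid, ⟨x₀, hx₀, hgx₀⟩, hdim⟩ := isFacet_convexHull_iff.1 h
  obtain ⟨y₀, hy₀, hx₀y₀⟩ := hcomp x₀ hx₀
  refine isFacet_convexHull_iff (f := g ∘ₗ LinearMap.fst ℝ _ _) |>.2 ⟨fun p hp => hvalid _ hp.1,
    ⟨(x₀, y₀, 0), mk_mem_diamSet_of_add_le_one hx₀ hy₀ hx₀y₀ fun _ => Or.inl rfl, hgx₀⟩, ?_⟩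
  have hT : ∀ x ∈ {x ∈ C | g x = a₀}, x ≤ 1 := fun x hx => hC x hx.1
  have hface : {p ∈ diamSet C C | (g ∘ₗ LinearMap.fst ℝ _ _) p = a₀} =
      diamSet {x ∈ C | g x = a₀} C :=
    sep_diamSet_fst (fun x => g x = a₀)
  rw [hface, finrank_vectorSpan_diamSet hT hC ⟨hx₀, hgx₀⟩ hy₀ hx₀y₀,
    finrank_vectorSpan_diamSet hC hC hx₀ hy₀ hx₀y₀, ← hdim]
  ring

theorem isFacet_diamSet_snd (h : IsFacet (convexHull ℝ C) g a₀) :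
    IsFacet (convexHull ℝ (diamSet C C)) (fun p => g p.2.1) a₀ := by
  obtain ⟨hvalid, ⟨y₀, hy₀, hgy₀⟩, hdim⟩ := isFacet_convexHull_iff.1 h
  obtain ⟨x₀, hx₀, hy₀x₀⟩ := hcomp y₀ hy₀
  have hx₀y₀ : ∀ i, x₀ i + y₀ i ≤ 1 := fun i => (add_comm _ _).trans_le (hy₀x₀ i)
  let π₂ := LinearMap.fst ℝ (Fin n → ℝ) (Fin n → ℝ) ∘ₗ LinearMap.snd ℝ (Fin n → ℝ) _
  refine isFacet_convexHull_iff (f := g ∘ₗ π₂) |>.2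
    ⟨fun p hp => hvalid _ hp.2.1,
      ⟨(x₀, y₀, 0), mk_mem_diamSet_of_add_le_one hx₀ hy₀ hx₀y₀ fun _ => Or.inl rfl, hgy₀⟩, ?_⟩
  have hT : ∀ y ∈ {y ∈ C | g y = a₀}, y ≤ 1 := fun y hy => hC y hy.1
  have hface : {p ∈ diamSet C C | (g ∘ₗ π₂) p = a₀} =
      diamSet C {y ∈ C | g y = a₀} :=
    sep_diamSet_snd (fun y => g y = a₀)
  rw [hface, finrank_vectorSpan_diamSet hC hT hx₀ ⟨hy₀, hgy₀⟩ hx₀y₀,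
    finrank_vectorSpan_diamSet hC hC hx₀ hy₀ hx₀y₀, ← hdim]
  ring

end Diameter

theorem stmt11_general {n m : ℕ} (A : Matrix (Fin m) (Fin n) ℝ) (b : Fin m → ℝ)
    (hcomp : ∀ x, FeasBP A b x → ∃ y, FeasBP A b y ∧ ∀ i, x i + y i ≤ 1)
    (a : Fin n → ℝ) (a₀ : ℝ)
    (hfacet : IsFacet (polyBP A b) (fun x => ∑ i, a i * x i) a₀) :
    IsFacet (polyBPD' A b) (fun p => ∑ i, a i * p.1 i) a₀ ∧
    IsFacet (polyBPD' A b) (fun p => ∑ i, a i * p.2.1 i) a₀ := by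
  have hS : ∀ x ∈ {x | FeasBP A b x}, x ≤ 1 := fun x hx => hx.1.le_one
  exact ⟨isFacet_diamSet_fst (g := dotProductBilin ℝ ℝ a) hS hcomp hfacet,
    isFacet_diamSet_snd (g := dotProductBilin ℝ ℝ a) hS hcomp hfacet⟩

theorem stmt11 {n m : ℕ} (A : Matrix (Fin m) (Fin n) ℝ) (b : Fin m → ℝ)
    (hne : ∃ x, FeasBP A b x)
    (hcomp : ∀ x, FeasBP A b x → ∃ y, FeasBP A b y ∧ ∀ i, x i + y i ≤ 1)
    (a : Fin n → ℝ) (a₀ : ℝ)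
    (hfacet : IsFacet (polyBP A b) (fun x => ∑ i, a i * x i) a₀) :
    IsFacet (polyBPD' A b) (fun p => ∑ i, a i * p.1 i) a₀ ∧
    IsFacet (polyBPD' A b) (fun p => ∑ i, a i * p.2.1 i) a₀ :=
  stmt11_general A b hcomp a a₀ hfacet
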